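/- Let S be a semidomain. Then the polynomial semidomain S[x] is a GCD-semidomain (every finite nonempty subset of S[x]* has a greatest common divisor) if and only if S is a GCD-domain (in particular S must be an integral domain). -/

import Mathlib

/-!
In a GCD-monoid irreducible elements are prime. Over a semidomain `S` the monic linear
polynomial `X + 1` is irreducible, and
`(X + 1) * (X ^ 4 + X ^ 2 + 1) = (X ^ 3 + 1) * (X ^ 2 + X + 1)`.
Primality of `X + 1` would yield `-1 ∈ S`: `X + 1` cannot divide `X ^ 2 + X + 1`, which does not
vanish at `-1`, while a quotient of `X ^ 3 + 1` by `X + 1` must be `X ^ 2 - X + 1`. So `S` is an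
integral domain, and the GCD property descends from `S[X]` to `S` through the constants.
Conversely, over a GCD-domain the content theory of polynomials (Gauss's lemma) makes `S[X]` a
GCD-domain.
-/

open Polynomial

/-- A witness that the commutative semiring `S` embeds into an integral domain. -/
structure SemidomainWitness (S : Type) [CommSemiring S] : Type 1 where
  R : Type
  [commRing : CommRing R]
  [isDomain : IsDomain R]
  f : S →+* R
  inj : Function.Injective f

/-- A semidomain is a commutative semiring that embeds into an integral domain. -/
def IsSemidomain (S : Type) [CommSemiring S] : Prop :=
  Nonempty (SemidomainWitness S)


/-- A commutative monoid with zero is a GCD-monoid (on its nonzero elements) if every finite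
nonempty set of nonzero elements has a greatest common divisor. -/
def IsGCDS (M : Type) [CommMonoidWithZero M] : Prop :=
  ∀ T : Finset M, T.Nonempty → (∀ t ∈ T, t ≠ 0) →
    ∃ d : M, (∀ t ∈ T, d ∣ t) ∧ ∀ e : M, (∀ t ∈ T, e ∣ t) → e ∣ d

theorem isGCDS_iff_isGCDMonoid {M : Type} [CommMonoidWithZero M] [IsCancelMulZero M] :
    IsGCDS M ↔ IsGCDMonoid M := by
  refine ⟨fun h => isGCDMonoid_iff_exists_gcd.mpr ⟨inferInstance, fun a b => ?_⟩,
    fun _ => ?_⟩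
  · rcases eq_or_ne a 0 with rfl | ha
    · exact ⟨b, fun d => by simp⟩
    rcases eq_or_ne b 0 with rfl | hb
    · exact ⟨a, fun d => by simp⟩
    classical
    obtain ⟨c, hca, hc⟩ := h {a, b} (by simp) (by simp [ha, hb])
    exact ⟨c, fun d => ⟨fun hd => hc d (by simpa using hd),
      fun hd => by simpa using fun t ht => hd.trans (hca t ht)⟩⟩
  · classical
    have := Classical.arbitrary (NormalizedGCDMonoid M)
    exact fun T _ _ =>
      ⟨T.gcd id, fun t ht => T.gcd_dvd ht, fun e he => Finset.dvd_gcd_iff.mpr he⟩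

theorem IsGCDS.of_polynomial {S : Type} [CommSemiring S] (h : IsGCDS S[X]) : IsGCDS S := by
  classical
  intro T hT hT0
  obtain ⟨d, hdT, hd⟩ := h (T.image C) (hT.image C) (by simpa using hT0)
  refine ⟨d.coeff 0, fun t ht => ?_, fun e he => ?_⟩
  · simpa using map_dvd constantCoeff (hdT (C t) (Finset.mem_image_of_mem C ht))
  · simpa using map_dvd constantCoeff (hd (C e) (by simpa using fun t ht => map_dvd C (he t ht)))

theorem IsSemidomain.isDomain {S : Type} [CommSemiring S] (hS : IsSemidomain S) : IsDomain S :=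
  let ⟨W⟩ := hS
  letI := W.commRing
  haveI := W.isDomain
  W.inj.isDomain W.f

theorem IsSemidomain.polynomial {S : Type} [CommSemiring S] (hS : IsSemidomain S) :
    IsSemidomain S[X] :=
  let ⟨W⟩ := hS
  letI := W.commRing
  haveI := W.isDomain
  ⟨⟨W.R[X], mapRingHom W.f, map_injective W.f W.inj⟩⟩

theorem Polynomial.Monic.irreducible_of_natDegree_eq_one {S : Type} [CommSemiring S]
    [NoZeroDivisors S] {p : S[X]} (hm : p.Monic) (hp : p.natDegree = 1) : Irreducible p := by
  refine ⟨not_isUnit_of_natDegree_pos p (by omega), fun a b hab => ?_⟩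
  have hab0 : a * b ≠ 0 := by rintro h; rw [hab, h] at hp; simp at hp
  have hdeg : a.natDegree + b.natDegree = 1 := by
    rw [← hp, hab,
      Polynomial.natDegree_mul (left_ne_zero_of_mul hab0) (right_ne_zero_of_mul hab0)]
  have isUnit_of_dvd {c : S[X]} (hc : c ∣ p) (hc0 : c.natDegree = 0) : IsUnit c := by
    rw [eq_C_of_natDegree_eq_zero hc0] at hc ⊢
    exact isUnit_C.mpr (hm.C_dvd_iff_isUnit.mp hc)
  rcases Nat.eq_zero_or_pos a.natDegree with ha | ha
  · exact .inl (isUnit_of_dvd (hab ▸ dvd_mul_right a b) ha)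
  · exact .inr (isUnit_of_dvd (hab ▸ dvd_mul_left b a) (by omega))

noncomputable abbrev commRingOfExistsAddEqZero {S : Type} [CommSemiring S]
    (h : ∀ a : S, ∃ b, a + b = 0) : CommRing S :=
  letI : Neg S := ⟨fun a => (h a).choose⟩
  { ‹CommSemiring S› with
    zsmul := zsmulRec
    neg_add_cancel a := by rw [add_comm]; exact (h a).choose_spec }

theorem exists_one_add_eq_zero_of_prime_X_add_one {S R : Type} [CommSemiring S] [CommRing R]
    [Nontrivial R] (f : S →+* R) (hp : Prime (X + 1 : S[X])) : ∃ b : S, 1 + b = 0 := by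
  have hdvd : (X + 1 : S[X]) ∣ (X ^ 3 + 1) * (X ^ 2 + X + 1) :=
    ⟨X ^ 4 + X ^ 2 + 1, by ring⟩
  rcases hp.dvd_or_dvd hdvd with ⟨t, ht⟩ | hdvd
  · have h0 : t.coeff 0 = 1 := by simpa using (congrArg (coeff · 0) ht).symm
    have h1 : t.coeff 0 + t.coeff 1 = 0 := by
      simpa [add_mul, coeff_X_mul, coeff_X_pow, coeff_one] using (congrArg (coeff · 1) ht).symm
    exact ⟨t.coeff 1, h0 ▸ h1⟩
  · refine absurd (map_dvd (mapRingHom f) hdvd) ?_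
    rw [coe_mapRingHom, Polynomial.map_add, Polynomial.map_X, Polynomial.map_one,
      ← sub_neg_eq_add, ← C_1, ← C_neg, dvd_iff_isRoot]
    simp

/-- For a semidomain `S`: the polynomial semidomain `S[x]` is a GCD-semidomain if and only if
`S` is a GCD-domain (in particular, `S` must be an integral domain, i.e. `(S,+)` is a group). -/
theorem stmt18 (S : Type) [CommSemiring S] (hS : IsSemidomain S) :
    IsGCDS (Polynomial S) ↔ ((∀ a : S, ∃ b : S, a + b = 0) ∧ IsGCDS S) := by
  have := hS.isDomain
  have := hS.polynomial.isDomain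
  refine ⟨fun h => ⟨?_, h.of_polynomial⟩, fun ⟨hneg, h⟩ => ?_⟩
  · obtain ⟨W⟩ := hS
    let := W.commRing
    have := W.isDomain
    have : IsGCDMonoid S[X] := isGCDS_iff_isGCDMonoid.mp h
    obtain ⟨b, hb⟩ := exists_one_add_eq_zero_of_prime_X_add_one W.f
      ((monic_X_add_C 1).irreducible_of_natDegree_eq_one (natDegree_X_add_C 1)).prime
    exact fun a => ⟨a * b, by rw [← mul_one_add, hb, mul_zero]⟩
  · let := commRingOfExistsAddEqZero hneg
    have : IsGCDMonoid S := isGCDS_iff_isGCDMonoid.mp h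
    exact isGCDS_iff_isGCDMonoid.mpr inferInstance
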